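/- arXiv:1104.0167 — 3 statements merged into one kernel-verified Lean document; each statement's English description precedes it below -/
import Mathlib

section
/- Let σ : [0,∞) → [0,∞) be continuous, regularly varying at 0 with index λ ∈ (0,1) and regularly varying at infinity with index α ∈ (0,1). Then for any ε > 0 there exist constants C, a > 0 such that for all 0 < x ≤ a and all t > 0, σ(tx)/σ(x) ≤ C·t^ℓ if t ≤ 1 and σ(tx)/σ(x) ≤ C·t^u if t > 1, where ℓ = min(λ−ε, α+ε) and u = max(α+ε, λ+ε). -/
open Filter Set Real Topology

/-!
By Baire's theorem, applied to the closed sets of `t ≥ 1` for which `f (t * x) / f x` lies in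
`[1 / N, N]` for all `x > N`, regular variation at infinity bounds `f (r * y) / f y` uniformly in
`r ∈ [1, ρ]` and large `y`. Iterating the step `f (ρ * y) ≤ ρ ^ (β + ε) * f y` then gives the
Potter bound `f (t * y) ≤ K * t ^ (β + ε) * f y` for all `t ≥ 1`; applied to `1 / f` and to
`x ↦ f x⁻¹` it gives two-sided bounds at infinity and at `0`. When `x ≤ a < t * x`, the ratio
`σ (t * x) / σ x` is split at `a`: the bound at `0` controls `σ a / σ x`, and the bound at
infinity, carried down to `a` by compactness of `[a, Y]`, controls `σ (t * x) / σ a`.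
-/

def IsRegularlyVaryingAtTop (f : ℝ → ℝ) (β : ℝ) : Prop :=
  ∀ t > 0, Tendsto (fun x => f (t * x) / f x) atTop (𝓝 (t ^ β))

lemma IsRegularlyVaryingAtTop.inv {f : ℝ → ℝ} {β : ℝ} (hf : IsRegularlyVaryingAtTop f β) :
    IsRegularlyVaryingAtTop (fun x => (f x)⁻¹) (-β) := by
  intro t ht
  rw [rpow_neg ht.le]
  simpa only [inv_div_inv, inv_div] using (hf t ht).inv₀ (rpow_pos_of_pos ht β).ne'

lemma isRegularlyVaryingAtTop_comp_inv {f : ℝ → ℝ} {β : ℝ}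
    (hf : ∀ t > 0, Tendsto (fun x => f (t * x) / f x) (𝓝[>] 0) (𝓝 (t ^ β))) :
    IsRegularlyVaryingAtTop (fun y => f y⁻¹) (-β) := by
  intro t ht
  have := (hf t⁻¹ (inv_pos.2 ht)).comp tendsto_inv_atTop_nhdsGT_zero
  rw [inv_rpow ht.le, ← rpow_neg ht.le] at this
  simpa only [Function.comp_def, mul_inv] using this

lemma le_mul_rpow_of_geometric_step {f : ℝ → ℝ} {ρ K Y γ : ℝ} (hρ : 1 < ρ) (hY : 0 ≤ Y)
    (hpos : ∀ y ≥ Y, 0 < f y) (hloc : ∀ y ≥ Y, ∀ r ∈ Icc 1 ρ, f (r * y) ≤ K * f y)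
    (hstep : ∀ y ≥ Y, f (ρ * y) ≤ ρ ^ γ * f y) :
    ∀ y ≥ Y, ∀ t ≥ 1, f (t * y) ≤ K * ρ ^ |γ| * t ^ γ * f y := by
  have hρ0 : 0 < ρ := by linarith
  have hbase : ∀ y ≥ Y, ∀ t ∈ Icc 1 ρ, f (t * y) ≤ K * ρ ^ |γ| * t ^ γ * f y := by
    intro y hy t ht
    have ht0 : 0 < t := one_pos.trans_le ht.1
    have hty : Y ≤ t * y := hy.trans (le_mul_of_one_le_left (hY.trans hy) ht.1)
    have hKf : 0 ≤ K * f y := (hpos _ hty).le.trans (hloc y hy t ht)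
    have hpow : 1 ≤ ρ ^ |γ| * t ^ γ :=
      calc (1 : ℝ) ≤ t ^ (|γ| + γ) := one_le_rpow ht.1 (by linarith [neg_abs_le γ])
        _ = t ^ |γ| * t ^ γ := rpow_add ht0 _ _
        _ ≤ ρ ^ |γ| * t ^ γ := by gcongr; exact ht.2
    calc f (t * y) ≤ K * f y := hloc y hy t ht
      _ ≤ (ρ ^ |γ| * t ^ γ) * (K * f y) := le_mul_of_one_le_left hKf hpow
      _ = K * ρ ^ |γ| * t ^ γ * f y := by ring
  have hind : ∀ n : ℕ, ∀ y ≥ Y, ∀ t ≥ 1, t ≤ ρ ^ (n + 1) →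
      f (t * y) ≤ K * ρ ^ |γ| * t ^ γ * f y := by
    intro n
    induction n with
    | zero => exact fun y hy t ht1 ht => hbase y hy t ⟨ht1, by simpa using ht⟩
    | succ n ih =>
      intro y hy t ht1 ht
      rcases le_or_gt t ρ with htρ | htρ
      · exact hbase y hy t ⟨ht1, htρ⟩
      have hs1 : 1 ≤ t / ρ := (one_le_div hρ0).2 htρ.le
      have hs : t / ρ ≤ ρ ^ (n + 1) := by rwa [div_le_iff₀ hρ0, ← pow_succ]
      have hsy : Y ≤ t / ρ * y := hy.trans (le_mul_of_one_le_left (hY.trans hy) hs1)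
      calc f (t * y) = f (ρ * (t / ρ * y)) := by rw [← mul_assoc, mul_div_cancel₀ _ hρ0.ne']
        _ ≤ ρ ^ γ * f (t / ρ * y) := hstep _ hsy
        _ ≤ ρ ^ γ * (K * ρ ^ |γ| * (t / ρ) ^ γ * f y) := by gcongr; exact ih y hy _ hs1 hs
        _ = K * ρ ^ |γ| * t ^ γ * f y := by
          rw [div_rpow (by linarith) hρ0.le]; field_simp
  intro y hy t ht
  obtain ⟨n, hn⟩ := pow_unbounded_of_one_lt t hρ
  exact hind n y hy t ht (hn.le.trans (pow_le_pow_right₀ hρ.le n.le_succ))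

section
variable {f : ℝ → ℝ} {β : ℝ}

lemma IsRegularlyVaryingAtTop.exists_Icc_ratio_bounded (hf : IsRegularlyVaryingAtTop f β)
    (hcont : ContinuousOn f (Ioi 0)) (hpos : ∀ x > 0, 0 < f x) :
    ∃ N : ℕ, ∃ c d, 1 < c ∧ c < d ∧ ∀ t ∈ Icc c d, ∀ x > (N : ℝ),
      f (t * x) ≤ N * f x ∧ f x ≤ N * f (t * x) := by
  set F : ℕ → Set ℝ := fun N => ⋂ x ∈ Ioi (N : ℝ),
    {t ∈ Ici 1 | f (t * x) ≤ N * f x} ∩ {t ∈ Ici 1 | f x ≤ N * f (t * x)}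
  have hclosed : ∀ N, IsClosed (F N) := by
    refine fun N => isClosed_biInter fun x hx => ?_
    have hx0 : 0 < x := (Nat.cast_nonneg N).trans_lt hx
    have hcx : ContinuousOn (fun t => f (t * x)) (Ici 1) :=
      hcont.comp (continuous_mul_const x).continuousOn fun t ht => mul_pos (one_pos.trans_le ht) hx0
    exact (isClosed_Ici.isClosed_le hcx continuousOn_const).inter
      (isClosed_Ici.isClosed_le continuousOn_const (continuousOn_const.mul hcx))
  have hcover : Ioi 1 ⊆ ⋃ N, F N := by
    intro t ht
    have ht1 : (1 : ℝ) < t := ht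
    have ht0 : 0 < t := one_pos.trans ht1
    have hL := rpow_pos_of_pos ht0 β
    obtain ⟨Y, hY⟩ := eventually_atTop.1
      ((hf t ht0).eventually (Ioo_mem_nhds (half_lt_self hL) (lt_two_mul_self hL)))
    obtain ⟨N, hN⟩ := exists_nat_ge (max Y (max (2 * t ^ β) (2 / t ^ β)))
    refine mem_iUnion.2 ⟨N, mem_iInter₂.2 fun x hx => ?_⟩
    have hx0 : 0 < x := (Nat.cast_nonneg N).trans_lt hx
    have hfx := hpos x hx0
    obtain ⟨hlow, hup⟩ := hY x (((le_max_left _ _).trans hN).trans hx.le)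
    rw [lt_div_iff₀ hfx] at hlow
    rw [div_lt_iff₀ hfx] at hup
    have hN₁ : 2 * t ^ β ≤ N := (le_max_left _ _).trans ((le_max_right _ _).trans hN)
    have hN₂ : 2 / t ^ β ≤ N := (le_max_right _ _).trans ((le_max_right _ _).trans hN)
    refine ⟨⟨ht1.le, by nlinarith⟩, ht1.le, ?_⟩
    calc f x = 2 / t ^ β * (t ^ β / 2 * f x) := by field_simp
      _ ≤ N * f (t * x) := by gcongr
  -- `Iic 1` pads the cover of `Ioi 1` to a cover of `ℝ`, where Baire's theorem applies
  set G : Option ℕ → Set ℝ := fun i => i.elim (Iic 1) F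
  have hGcover : ⋃ i, G i = univ := by
    refine eq_univ_of_forall fun t => ?_
    rcases le_or_gt t 1 with ht | ht
    · exact mem_iUnion.2 ⟨none, ht⟩
    · obtain ⟨N, hN⟩ := mem_iUnion.1 (hcover ht)
      exact mem_iUnion.2 ⟨some N, hN⟩
  obtain ⟨p, hp, hp1⟩ := (dense_iUnion_interior_of_closed (fun i => i.rec isClosed_Iic hclosed)
    hGcover).exists_mem_open isOpen_Ioi nonempty_Ioi
  obtain ⟨_ | N, hpN⟩ := mem_iUnion.1 hp
  · exact absurd (interior_subset hpN) (notMem_Iic.2 hp1)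
  obtain ⟨d, hpd, hsub⟩ := mem_nhdsGE_iff_exists_Icc_subset.1
    (mem_nhdsWithin_of_mem_nhds (isOpen_interior.mem_nhds hpN))
  refine ⟨N, p, d, hp1, hpd, fun t ht x hx => ?_⟩
  have := mem_iInter₂.1 (interior_subset (hsub ht)) x hx
  exact ⟨this.1.2, this.2.2⟩

lemma IsRegularlyVaryingAtTop.exists_uniform_bound (hf : IsRegularlyVaryingAtTop f β)
    (hcont : ContinuousOn f (Ioi 0)) (hpos : ∀ x > 0, 0 < f x) :
    ∃ ρ > 1, ∃ K Y, ∀ y ≥ Y, ∀ r ∈ Icc 1 ρ, f (r * y) ≤ K * f y := by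
  obtain ⟨N, c, d, hc, hcd, hN⟩ := hf.exists_Icc_ratio_bounded hcont hpos
  have hc0 : 0 < c := one_pos.trans hc
  -- write `y = c * x`: then `r * y = (r * c) * x` with `r * c ∈ [c, d]`
  refine ⟨d / c, (one_lt_div hc0).2 hcd, N * N, c * (N + 1), fun y hy r hr => ?_⟩
  have hx : (N : ℝ) < y / c := by rw [lt_div_iff₀ hc0]; nlinarith
  have hrc : r * c ∈ Icc c d := ⟨le_mul_of_one_le_left hc0.le hr.1, (le_div_iff₀ hc0).1 hr.2⟩
  have hy : y = c * (y / c) := (mul_div_cancel₀ y hc0.ne').symm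
  calc f (r * y) = f (r * c * (y / c)) := by rw [mul_assoc, ← hy]
    _ ≤ N * f (y / c) := (hN _ hrc _ hx).1
    _ ≤ N * (N * f (c * (y / c))) := by
      gcongr; exact (hN c (left_mem_Icc.2 hcd.le) _ hx).2
    _ = N * N * f y := by rw [← hy, mul_assoc]

lemma IsRegularlyVaryingAtTop.potter_upper (hf : IsRegularlyVaryingAtTop f β)
    (hcont : ContinuousOn f (Ioi 0)) (hpos : ∀ x > 0, 0 < f x) {ε : ℝ} (hε : 0 < ε) :
    ∃ K > 0, ∃ Y > 0, ∀ y ≥ Y, ∀ t ≥ 1, f (t * y) ≤ K * t ^ (β + ε) * f y := by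
  obtain ⟨ρ, hρ, K, Y₀, hloc⟩ := hf.exists_uniform_bound hcont hpos
  have hρ0 : 0 < ρ := one_pos.trans hρ
  obtain ⟨Y₁, hstep⟩ := eventually_atTop.1 ((hf ρ hρ0).eventually_lt_const
    (rpow_lt_rpow_of_exponent_lt hρ (lt_add_of_pos_right β hε)))
  set Y := max 1 (max Y₀ Y₁)
  have hY : 0 < Y := one_pos.trans_le (le_max_left _ _)
  have hK : 1 ≤ K := by
    have := hloc Y (le_max_left _ _ |>.trans (le_max_right _ _)) 1 (left_mem_Icc.2 hρ.le)
    rw [one_mul] at this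
    exact (le_mul_iff_one_le_left (hpos Y hY)).1 this
  refine ⟨K * ρ ^ |β + ε|, by positivity, Y, hY, le_mul_rpow_of_geometric_step hρ hY.le
    (fun y hy => hpos y (hY.trans_le hy))
    (fun y hy => hloc y ((le_max_left _ _ |>.trans (le_max_right _ _)).trans hy))
    (fun y hy => ?_)⟩
  have hy₁ : Y₁ ≤ y := (le_max_right _ _ |>.trans (le_max_right _ _)).trans hy
  exact ((div_lt_iff₀ (hpos y (hY.trans_le hy))).1 (hstep y hy₁)).le

lemma IsRegularlyVaryingAtTop.potter (hf : IsRegularlyVaryingAtTop f β)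
    (hcont : ContinuousOn f (Ioi 0)) (hpos : ∀ x > 0, 0 < f x) {ε : ℝ} (hε : 0 < ε) :
    ∃ K > 0, ∃ Y > 0, ∀ y ≥ Y, ∀ t ≥ 1,
      t ^ (β - ε) * f y ≤ K * f (t * y) ∧ f (t * y) ≤ K * t ^ (β + ε) * f y := by
  obtain ⟨K₁, hK₁, Y₁, hY₁, hup⟩ := hf.potter_upper hcont hpos hε
  obtain ⟨K₂, -, Y₂, -, hlow⟩ := hf.inv.potter_upper
    (hcont.inv₀ fun x hx => (hpos x hx).ne') (fun x hx => inv_pos.2 (hpos x hx)) hε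
  refine ⟨max K₁ K₂, lt_max_of_lt_left hK₁, max Y₁ Y₂, lt_max_of_lt_left hY₁,
    fun y hy t ht => ⟨?_, ?_⟩⟩
  · have hy0 : 0 < y := hY₁.trans_le (le_of_max_le_left hy)
    have ht0 : 0 < t := one_pos.trans_le ht
    have h := hlow y (le_of_max_le_right hy) t ht
    rw [show -β + ε = -(β - ε) by ring, rpow_neg ht0.le, mul_assoc, ← mul_inv,
      inv_le_iff_one_le_mul₀ (hpos _ (mul_pos ht0 hy0)), ← div_eq_mul_inv, div_mul_eq_mul_div,
      one_le_div (mul_pos (rpow_pos_of_pos ht0 _) (hpos y hy0))] at h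
    exact h.trans (by gcongr; exacts [(hpos _ (mul_pos ht0 hy0)).le, le_max_right _ _])
  · have hy0 : 0 < y := hY₁.trans_le (le_of_max_le_left hy)
    exact (hup y (le_of_max_le_left hy) t ht).trans
      (by gcongr; exacts [(hpos y hy0).le, le_max_left _ _])

end

lemma le_mul_rpow_of_rpow_neg_mul_le {t c A B K : ℝ} (ht : 0 < t)
    (h : t ^ (-c) * A ≤ K * B) : A ≤ K * t ^ c * B := by
  rw [rpow_neg ht.le, inv_mul_le_iff₀ (rpow_pos_of_pos ht c)] at h
  linarith

lemma rpow_mul_le_of_le_mul_rpow_neg {t c A B K : ℝ} (ht : 0 < t)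
    (h : A ≤ K * t ^ (-c) * B) : t ^ c * A ≤ K * B := by
  have hc := rpow_pos_of_pos ht c
  rw [rpow_neg ht.le] at h
  calc t ^ c * A ≤ t ^ c * (K * (t ^ c)⁻¹ * B) := by gcongr
    _ = K * B := by field_simp

lemma potter_nhdsGT_zero {f : ℝ → ℝ} {β ε : ℝ}
    (hf : ∀ t > 0, Tendsto (fun x => f (t * x) / f x) (𝓝[>] 0) (𝓝 (t ^ β)))
    (hcont : ContinuousOn f (Ioi 0)) (hpos : ∀ x > 0, 0 < f x) (hε : 0 < ε) :
    ∃ K > 0, ∃ a > 0, ∀ x > 0, ∀ t ≥ 1, t * x ≤ a →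
      t ^ (β - ε) * f x ≤ K * f (t * x) ∧ f (t * x) ≤ K * t ^ (β + ε) * f x := by
  have hcont' : ContinuousOn (fun y => f y⁻¹) (Ioi 0) :=
    hcont.comp (continuousOn_inv₀.mono fun y hy => (mem_Ioi.1 hy).ne')
      fun y hy => mem_Ioi.2 (inv_pos.2 hy)
  obtain ⟨K, hK, Y, hY, hP⟩ := (isRegularlyVaryingAtTop_comp_inv hf).potter hcont'
    (fun y hy => hpos _ (inv_pos.2 hy)) hε
  refine ⟨K, hK, Y⁻¹, inv_pos.2 hY, fun x hx t ht htx => ?_⟩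
  have ht0 : 0 < t := one_pos.trans_le ht
  -- the point `y = (t * x)⁻¹` is large and `t * y = x⁻¹`
  have hy : Y ≤ (t * x)⁻¹ := (le_inv_comm₀ (mul_pos ht0 hx) hY).1 htx
  have hty : (t * (t * x)⁻¹)⁻¹ = x := by field_simp
  obtain ⟨hlow, hup⟩ := hP _ hy t ht
  simp only [inv_inv, hty] at hlow hup
  rw [show -β - ε = -(β + ε) by ring] at hlow
  rw [show -β + ε = -(β - ε) by ring] at hup
  exact ⟨rpow_mul_le_of_le_mul_rpow_neg ht0 hup, le_mul_rpow_of_rpow_neg_mul_le ht0 hlow⟩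

lemma exists_le_mul_rpow_of_potter_upper {f : ℝ → ℝ} {K Y γ a : ℝ}
    (hcont : ContinuousOn f (Ioi 0)) (hpos : ∀ x > 0, 0 < f x) (hK : 0 ≤ K) (hγ : 0 ≤ γ)
    (ha : 0 < a) (hP : ∀ y ≥ Y, ∀ t ≥ 1, f (t * y) ≤ K * t ^ γ * f y) :
    ∃ B ≥ 1, ∀ t ≥ 1, f (t * a) ≤ B * t ^ γ * f a := by
  set Y' := max a Y
  have hY' : 0 < Y' := ha.trans_le (le_max_left _ _)
  obtain ⟨M, hM⟩ := isCompact_Icc.exists_bound_of_continuousOn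
    (hcont.mono fun z (hz : z ∈ Icc a Y') => ha.trans_le hz.1)
  have hM' : ∀ z ∈ Icc a Y', f z ≤ M := fun z hz => (le_abs_self _).trans (hM z hz)
  have hM0 : 0 ≤ M := (norm_nonneg _).trans (hM a ⟨le_rfl, le_max_left _ _⟩)
  have hfa := hpos a ha
  have hbound : ∀ t ≥ 1, f (t * a) ≤ (K + 1) * M * t ^ γ := by
    intro t ht
    have htγ : 1 ≤ t ^ γ := one_le_rpow ht hγ
    rcases le_total (t * a) Y' with hta | hta
    · calc f (t * a) ≤ M := hM' _ ⟨le_mul_of_one_le_left ha.le ht, hta⟩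
        _ ≤ (K + 1) * M * t ^ γ := by
          nlinarith [mul_nonneg hK hM0, mul_nonneg (mul_nonneg hK hM0) (sub_nonneg.2 htγ),
            mul_nonneg hM0 (sub_nonneg.2 htγ)]
    · have hs : 1 ≤ t * a / Y' := (one_le_div hY').2 hta
      have hst : t * a / Y' ≤ t := by
        rw [div_le_iff₀ hY']; exact mul_le_mul_of_nonneg_left (le_max_left _ _) (by linarith)
      calc f (t * a) = f (t * a / Y' * Y') := by rw [div_mul_cancel₀ _ hY'.ne']
        _ ≤ K * (t * a / Y') ^ γ * f Y' := hP _ (le_max_right _ _) _ hs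
        _ ≤ K * t ^ γ * M := by
          gcongr
          · exact (hpos _ hY').le
          · exact hM' _ ⟨le_max_left _ _, le_rfl⟩
        _ ≤ (K + 1) * M * t ^ γ := by nlinarith
  refine ⟨max 1 ((K + 1) * M / f a), le_max_left _ _, fun t ht => (hbound t ht).trans ?_⟩
  calc (K + 1) * M * t ^ γ = (K + 1) * M / f a * t ^ γ * f a := by field_simp
    _ ≤ max 1 ((K + 1) * M / f a) * t ^ γ * f a := by gcongr; exact le_max_right _ _

lemma le_mul_rpow_of_near_zero_of_far {f : ℝ → ℝ} {a K B p q u : ℝ} (hpos : ∀ x > 0, 0 < f x)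
    (hK : 0 ≤ K) (hB : 1 ≤ B) (hp : p ≤ u) (hq : q ≤ u)
    (hnear : ∀ x > 0, ∀ t ≥ 1, t * x ≤ a → f (t * x) ≤ K * t ^ p * f x)
    (hfar : ∀ t ≥ 1, f (t * a) ≤ B * t ^ q * f a) :
    ∀ x ∈ Ioc 0 a, ∀ t ≥ 1, f (t * x) ≤ K * B * t ^ u * f x := by
  intro x ⟨hx, hxa⟩ t ht
  have ha : 0 < a := hx.trans_le hxa
  have hfx := (hpos x hx).le
  rcases le_or_gt (t * x) a with htx | htx
  · calc f (t * x) ≤ K * t ^ p * f x := hnear x hx t ht htx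
      _ ≤ K * t ^ u * f x := by gcongr
      _ ≤ K * B * t ^ u * f x := by
        gcongr
        exact le_mul_of_one_le_right hK hB
  -- pass through the point `a`: `t * x = s * a` and `a = r * x` with `s, r ≥ 1`
  set s := t * x / a
  set r := a / x
  have hs : 1 ≤ s := (one_le_div ha).2 htx.le
  have hr : 1 ≤ r := (one_le_div hx).2 hxa
  have hra : r * x = a := div_mul_cancel₀ a hx.ne'
  have hsr : s * r = t := by simp only [s, r]; field_simp
  calc f (t * x) = f (s * a) := by rw [div_mul_cancel₀ _ ha.ne']
    _ ≤ B * s ^ q * f a := hfar s hs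
    _ ≤ B * s ^ u * f a := by gcongr; exact (hpos a ha).le
    _ ≤ B * s ^ u * (K * r ^ p * f x) := by
      gcongr
      rw [← hra]
      exact hnear x hx r hr hra.le
    _ ≤ B * s ^ u * (K * r ^ u * f x) := by gcongr
    _ = K * B * (s * r) ^ u * f x := by
      rw [mul_rpow (by positivity) (by positivity)]; ring
    _ = K * B * t ^ u * f x := by
      rw [hsr]

theorem stmt0_general (σ : ℝ → ℝ) (lam α : ℝ)
    (hα : α ∈ Set.Ioo (0:ℝ) 1)
    (hcont : ContinuousOn σ (Set.Ici 0)) (hpos : ∀ x > (0:ℝ), 0 < σ x)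
    (hRV0 : ∀ t > (0:ℝ), Tendsto (fun x => σ (t * x) / σ x) (nhdsWithin 0 (Set.Ioi 0))
      (nhds (t ^ lam)))
    (hRVinf : ∀ t > (0:ℝ), Tendsto (fun x => σ (t * x) / σ x) atTop (nhds (t ^ α))) :
    ∀ ε > (0:ℝ), ∃ C > (0:ℝ), ∃ a > (0:ℝ), ∀ x : ℝ, 0 < x → x ≤ a → ∀ t > (0:ℝ),
      (t ≤ 1 → σ (t * x) / σ x ≤ C * t ^ (min (lam - ε) (α + ε))) ∧
      (1 < t → σ (t * x) / σ x ≤ C * t ^ (max (α + ε) (lam + ε))) := by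
  intro ε hε
  have hcont' : ContinuousOn σ (Ioi 0) := hcont.mono Ioi_subset_Ici_self
  obtain ⟨K, hK, a, ha, hzero⟩ := potter_nhdsGT_zero hRV0 hcont' hpos hε
  obtain ⟨K', hK', _, _, hinf⟩ :=
    (show IsRegularlyVaryingAtTop σ α from hRVinf).potter_upper hcont' hpos hε
  obtain ⟨B, hB, hfar⟩ :=
    exists_le_mul_rpow_of_potter_upper hcont' hpos hK'.le (by linarith [hα.1]) ha hinf
  have hupper := le_mul_rpow_of_near_zero_of_far hpos hK.le hB (le_max_right _ _) (le_max_left _ _)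
    (fun x hx t ht htx => (hzero x hx t ht htx).2) hfar
  refine ⟨K * B, by positivity, a, ha, fun x hx hxa t ht => ⟨fun ht1 => ?_, fun ht1 => ?_⟩⟩
  · have hsmall := (hzero (t * x) (mul_pos ht hx) t⁻¹ (one_le_inv₀ ht |>.2 ht1)
      (by rwa [inv_mul_cancel_left₀ ht.ne'])).1
    rw [inv_mul_cancel_left₀ ht.ne', inv_rpow ht.le, ← rpow_neg ht.le] at hsmall
    rw [div_le_iff₀ (hpos x hx)]
    calc σ (t * x) ≤ K * t ^ (lam - ε) * σ x := le_mul_rpow_of_rpow_neg_mul_le ht hsmall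
      _ ≤ K * t ^ min (lam - ε) (α + ε) * σ x := by
        gcongr K * ?_ * σ x
        · exact (hpos x hx).le
        · exact rpow_le_rpow_of_exponent_ge ht ht1 (min_le_left _ _)
      _ ≤ K * B * t ^ min (lam - ε) (α + ε) * σ x := by
        gcongr
        · exact (hpos x hx).le
        · exact le_mul_of_one_le_right hK.le hB
  · rw [div_le_iff₀ (hpos x hx)]
    exact hupper x ⟨hx, hxa⟩ t ht1.le

/-- Potter-type bound for a function regularly varying at 0 with index λ and at ∞ with index α. -/
theorem stmt0 (σ : ℝ → ℝ) (lam α : ℝ) (hlam : lam ∈ Set.Ioo (0:ℝ) 1)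
    (hα : α ∈ Set.Ioo (0:ℝ) 1)
    (hcont : ContinuousOn σ (Set.Ici 0)) (hpos : ∀ x > (0:ℝ), 0 < σ x)
    (hRV0 : ∀ t > (0:ℝ), Tendsto (fun x => σ (t * x) / σ x) (nhdsWithin 0 (Set.Ioi 0))
      (nhds (t ^ lam)))
    (hRVinf : ∀ t > (0:ℝ), Tendsto (fun x => σ (t * x) / σ x) atTop (nhds (t ^ α))) :
    ∀ ε > (0:ℝ), ∃ C > (0:ℝ), ∃ a > (0:ℝ), ∀ x : ℝ, 0 < x → x ≤ a → ∀ t > (0:ℝ),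
      (t ≤ 1 → σ (t * x) / σ x ≤ C * t ^ (min (lam - ε) (α + ε))) ∧
      (1 < t → σ (t * x) / σ x ≤ C * t ^ (max (α + ε) (lam + ε))) :=
  stmt0_general σ lam α hα hcont hpos hRV0 hRVinf
end

section
/- Let σ : (0,∞) → (0,∞) be continuous and regularly varying at 0 with index λ ∈ (0,1), and let δ(c) be defined for c > 0 by c·δ(c)/σ(δ(c)) = 1 with δ(c) → 0 as c → ∞. Then δ is regularly varying at infinity with index 1/(λ−1). -/
open Filter Set Real

/-!
Write `σ (exp (-x)) = exp (-λ x + k x)`. Regular variation of `σ` at `0` says exactly that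
`k (x + u) - k x → 0` for each `u`, and a Baire category argument (the uniform convergence theorem)
makes this locally uniform in `u`. In the coordinates `X = -log δ(c)`, `Y = -log δ(tc)` the
equation defining `δ` reads `k Y - k X = log t - (1 - λ) (Y - X)`. Uniform smallness of the
increments of `k` over unit steps makes `k` grow sublinearly, which bounds `Y - X`; uniform
convergence on that bounded range then gives `k Y - k X → 0`, hence `Y - X → log t / (1 - λ)`,
i.e. `δ(tc)/δ(c) → t ^ (1 / (λ - 1))`.
-/

open Metric Topology

namespace AdditiveSlowVariation

variable {k : ℝ → ℝ}

theorem exists_ball_forall_ge_abs_sub_le (hk : Continuous k)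
    (hp : ∀ u, Tendsto (fun x => k (x + u) - k x) atTop (𝓝 0)) {ε : ℝ} (hε : 0 < ε) :
    ∃ m : ℕ, ∃ a, ∃ r > 0, ∀ u ∈ ball a r, ∀ x ≥ (m : ℝ), |k (x + u) - k x| ≤ ε := by
  let B : ℕ → Set ℝ := fun m => ⋂ x ≥ (m : ℝ), {u | |k (x + u) - k x| ≤ ε}
  have hclosed (m : ℕ) : IsClosed (B m) :=
    isClosed_biInter fun x _ => isClosed_le (by fun_prop) continuous_const
  have hcover : ⋃ m, B m = univ := by
    refine eq_univ_of_forall fun u => ?_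
    obtain ⟨N, hN⟩ := eventually_atTop.mp ((hp u).eventually (closedBall_mem_nhds 0 hε))
    obtain ⟨m, hm⟩ := exists_nat_ge N
    refine mem_iUnion.mpr ⟨m, mem_iInter₂.mpr fun x hx => ?_⟩
    simpa using hN x (hm.trans hx)
  obtain ⟨m, a, ha⟩ := nonempty_interior_of_iUnion_of_closed hclosed hcover
  obtain ⟨r, hr, hball⟩ := Metric.isOpen_iff.mp isOpen_interior a ha
  exact ⟨m, a, r, hr, fun u hu x hx => mem_iInter₂.mp (interior_subset (hball hu)) x hx⟩

theorem tendstoLocallyUniformly_sub_comp_add (hk : Continuous k)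
    (hp : ∀ u, Tendsto (fun x => k (x + u) - k x) atTop (𝓝 0)) :
    TendstoLocallyUniformly (fun x u => k (x + u) - k x) 0 atTop := by
  refine Metric.tendstoLocallyUniformly_iff.mpr fun ε hε v₀ => ?_
  obtain ⟨m, a, r, hr, hB⟩ := exists_ball_forall_ge_abs_sub_le hk hp (half_pos hε)
  obtain ⟨N, hN⟩ := eventually_atTop.mp
    ((hp (a - v₀)).eventually (ball_mem_nhds 0 (half_pos hε)))
  refine ⟨ball v₀ r, ball_mem_nhds v₀ hr, ?_⟩
  filter_upwards [eventually_ge_atTop (m : ℝ), eventually_ge_atTop (N - v₀ + r)] with x hxm hxN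
  intro v hv
  have hv' : |v - v₀| < r := hv
  -- split at `x + v + (a - v₀)`: `hB` controls one increment, `hp (a - v₀)` the other
  have h₁ : |k (x + (v + (a - v₀))) - k x| ≤ ε / 2 :=
    hB _ (by rw [mem_ball, Real.dist_eq]; convert hv' using 2; ring) x hxm
  have h₂ : |k (x + v) - k (x + (v + (a - v₀)))| < ε / 2 := by
    simpa [abs_sub_comm, add_assoc] using hN (x + v) (by linarith [(abs_lt.mp hv').1])
  rw [Pi.zero_apply, dist_zero_left, Real.norm_eq_abs]
  calc |k (x + v) - k x|
      ≤ |k (x + v) - k (x + (v + (a - v₀)))| + |k (x + (v + (a - v₀))) - k x| :=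
        abs_sub_le _ _ _
    _ < ε := by linarith

theorem abs_sub_le_of_forall_abs_add_sub_le {X η : ℝ}
    (h : ∀ x ≥ X, ∀ u ∈ Icc (0 : ℝ) 1, |k (x + u) - k x| ≤ η) {x y : ℝ} (hx : X ≤ x)
    (hy : X ≤ y) : |k y - k x| ≤ η * (|y - x| + 1) := by
  wlog hxy : x ≤ y generalizing x y
  · rw [abs_sub_comm, abs_sub_comm y]
    exact this hy hx (le_of_not_ge hxy)
  rw [abs_of_nonneg (sub_nonneg.mpr hxy)]
  -- chop `[x, y]` into `⌈y - x⌉₊` steps of length at most one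
  set n := ⌈y - x⌉₊
  set d := (y - x) / n
  have hη : 0 ≤ η := (abs_nonneg _).trans (h X le_rfl 0 (by simp))
  have hd : d ∈ Icc (0 : ℝ) 1 :=
    ⟨div_nonneg (by linarith) n.cast_nonneg, div_le_one_of_le₀ (Nat.le_ceil _) n.cast_nonneg⟩
  have hend : x + n * d = y := by
    rcases eq_or_ne n 0 with hn | hn
    · have := Nat.ceil_eq_zero.mp hn
      simp only [hn, Nat.cast_zero, zero_mul]
      linarith
    · show x + n * ((y - x) / n) = y
      rw [mul_div_cancel₀ _ (Nat.cast_ne_zero.mpr hn)]; ring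
  have hstep (i : ℕ) : |k (x + (i + 1 : ℕ) * d) - k (x + i * d)| ≤ η := by
    have := h (x + i * d) (by nlinarith [hd.1, i.cast_nonneg (α := ℝ)]) d hd
    rwa [Nat.cast_succ, add_one_mul, ← add_assoc]
  calc |k y - k x| = |∑ i ∈ Finset.range n, (k (x + (i + 1 : ℕ) * d) - k (x + i * d))| := by
        rw [Finset.sum_range_sub (fun i : ℕ => k (x + i * d)), hend]; simp
    _ ≤ ∑ i ∈ Finset.range n, |k (x + (i + 1 : ℕ) * d) - k (x + i * d)| :=
        Finset.abs_sum_le_sum_abs _ _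
    _ ≤ ∑ _i ∈ Finset.range n, η := Finset.sum_le_sum fun i _ => hstep i
    _ = n * η := by simp
    _ ≤ η * (y - x + 1) := by
        nlinarith [Nat.ceil_lt_add_one (sub_nonneg.mpr hxy)]

section

variable {ι : Type*} {l : Filter ι} {X Y : ι → ℝ} {a μ : ℝ}

theorem eventually_abs_sub_le
    (hk : TendstoLocallyUniformly (fun x u => k (x + u) - k x) 0 atTop) (hμ : 0 < μ)
    (hX : Tendsto X l atTop) (hY : Tendsto Y l atTop)
    (h : ∀ᶠ i in l, k (Y i) - k (X i) = a - μ * (Y i - X i)) :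
    ∀ᶠ i in l, |Y i - X i| ≤ 2 / μ * |a| + 1 := by
  have hunif := tendstoLocallyUniformly_iff_forall_isCompact.mp hk (Icc 0 1) isCompact_Icc
  obtain ⟨X₀, hX₀⟩ := eventually_atTop.mp (Metric.tendstoUniformlyOn_iff.mp hunif _ (half_pos hμ))
  have hsmall : ∀ x ≥ X₀, ∀ u ∈ Icc (0 : ℝ) 1, |k (x + u) - k x| ≤ μ / 2 := fun x hx u hu => by
    simpa only [Pi.zero_apply, dist_zero_left, Real.norm_eq_abs] using (hX₀ x hx u hu).le
  filter_upwards [h, hX.eventually_ge_atTop X₀, hY.eventually_ge_atTop X₀] with i hi hXi hYi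
  have hbound := abs_sub_le_of_forall_abs_add_sub_le hsmall hXi hYi
  rw [hi] at hbound
  have : μ * |Y i - X i| ≤ 2 * |a| + μ := by
    have := abs_sub_abs_le_abs_sub (μ * (Y i - X i)) a
    rw [abs_mul, abs_of_pos hμ, abs_sub_comm (μ * _) a] at this
    linarith
  rw [div_mul_eq_mul_div, div_add_one hμ.ne', le_div_iff₀ hμ]
  linarith

theorem tendsto_sub_of_eventually_eq
    (hk : TendstoLocallyUniformly (fun x u => k (x + u) - k x) 0 atTop) (hμ : 0 < μ)
    (hX : Tendsto X l atTop) (hY : Tendsto Y l atTop)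
    (h : ∀ᶠ i in l, k (Y i) - k (X i) = a - μ * (Y i - X i)) :
    Tendsto (fun i => Y i - X i) l (𝓝 (a / μ)) := by
  set C := 2 / μ * |a| + 1
  have hunif := tendstoLocallyUniformly_iff_forall_isCompact.mp hk (Icc (-C) C) isCompact_Icc
  have hdiff : Tendsto (fun i => k (Y i) - k (X i)) l (𝓝 0) := by
    refine Metric.tendsto_nhds.mpr fun ε hε => ?_
    filter_upwards [eventually_abs_sub_le hk hμ hX hY h,
      hX.eventually (Metric.tendstoUniformlyOn_iff.mp hunif ε hε)] with i hi hXi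
    simpa [dist_comm] using hXi (Y i - X i) (abs_le.mp hi)
  have hlin : Tendsto (fun i => a - μ * (Y i - X i)) l (𝓝 0) := hdiff.congr' h
  simpa [mul_div_cancel_left₀ _ hμ.ne'] using (tendsto_const_nhds (x := a)).sub hlin |>.div_const μ

end

end AdditiveSlowVariation

noncomputable def logSlowlyVaryingPart (σ : ℝ → ℝ) (lam x : ℝ) : ℝ := log (σ (exp (-x))) + lam * x

section

variable {σ : ℝ → ℝ} {lam : ℝ}

theorem continuous_logSlowlyVaryingPart (hcont : ContinuousOn σ (Ioi 0))
    (hpos : ∀ x > (0 : ℝ), 0 < σ x) : Continuous (logSlowlyVaryingPart σ lam) := by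
  have hσ : Continuous fun x => σ (exp (-x)) :=
    hcont.comp_continuous (by fun_prop) fun x => exp_pos (-x)
  exact (hσ.log fun x => (hpos _ (exp_pos (-x))).ne').add (by fun_prop)

theorem tendsto_logSlowlyVaryingPart_add_sub (hpos : ∀ x > (0 : ℝ), 0 < σ x)
    (hRV0 : ∀ t > (0 : ℝ), Tendsto (fun x => σ (t * x) / σ x) (𝓝[>] 0) (𝓝 (t ^ lam)))
    (u : ℝ) :
    Tendsto (fun x => logSlowlyVaryingPart σ lam (x + u) - logSlowlyVaryingPart σ lam x)
      atTop (𝓝 0) := by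
  have hexp : Tendsto (fun x => exp (-x)) atTop (𝓝[>] 0) :=
    tendsto_nhdsWithin_iff.mpr ⟨tendsto_exp_neg_atTop_nhds_zero, .of_forall fun x => exp_pos _⟩
  have hratio := ((hRV0 _ (exp_pos (-u))).comp hexp).log (rpow_pos_of_pos (exp_pos _) _).ne'
  rw [log_rpow (exp_pos _), log_exp] at hratio
  convert hratio.add_const (lam * u) using 1
  · ext x
    have hσ (y : ℝ) : σ (exp y) ≠ 0 := (hpos _ (exp_pos y)).ne'
    rw [Function.comp_apply, ← exp_add, show -u + -x = -(x + u) by ring, log_div (hσ _) (hσ _),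
      logSlowlyVaryingPart, logSlowlyVaryingPart]
    ring
  · rw [mul_neg, neg_add_cancel]

theorem logSlowlyVaryingPart_neg_log_of_eq {c y : ℝ} (hc : 0 < c) (hy : 0 < y)
    (h : σ y = c * y) :
    logSlowlyVaryingPart σ lam (-log y) = log c - (1 - lam) * (-log y) := by
  rw [logSlowlyVaryingPart, neg_neg, exp_log hy, h, log_mul hc.ne' hy.ne']
  ring

end

/-- If σ ∈ RV_0(λ) with λ ∈ (0,1) and c·δ(c)/σ(δ(c)) = 1 with δ(c) → 0 as c → ∞,
then δ is regularly varying at infinity with index 1/(λ-1). -/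
theorem stmt4 (σ δ : ℝ → ℝ) (lam : ℝ) (hlam : lam ∈ Set.Ioo (0:ℝ) 1)
    (hcont : ContinuousOn σ (Set.Ioi 0)) (hpos : ∀ x > (0:ℝ), 0 < σ x)
    (hRV0 : ∀ t > (0:ℝ), Tendsto (fun x => σ (t * x) / σ x) (nhdsWithin 0 (Set.Ioi 0))
      (nhds (t ^ lam)))
    (hδpos : ∀ c > (0:ℝ), 0 < δ c)
    (hδeq : ∀ c > (0:ℝ), c * δ c / σ (δ c) = 1)
    (hδlim : Tendsto δ atTop (nhds 0)) :
    ∀ t > (0:ℝ), Tendsto (fun c => δ (t * c) / δ c) atTop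
      (nhds (t ^ (1 / (lam - 1)))) := by
  intro t ht
  have hL := AdditiveSlowVariation.tendstoLocallyUniformly_sub_comp_add
    (continuous_logSlowlyVaryingPart hcont hpos)
    (tendsto_logSlowlyVaryingPart_add_sub hpos hRV0)
  have hX : Tendsto (fun c => -log (δ c)) atTop atTop :=
    tendsto_neg_atBot_atTop.comp <| tendsto_log_nhdsGT_zero.comp <|
      tendsto_nhdsWithin_iff.mpr ⟨hδlim, (eventually_gt_atTop 0).mono hδpos⟩
  have hY : Tendsto (fun c => -log (δ (t * c))) atTop atTop :=
    hX.comp (tendsto_id.const_mul_atTop ht)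
  have hfe : ∀ c > 0,
      logSlowlyVaryingPart σ lam (-log (δ c)) = log c - (1 - lam) * (-log (δ c)) :=
    fun c hc => logSlowlyVaryingPart_neg_log_of_eq hc (hδpos c hc)
      ((div_eq_one_iff_eq (hpos _ (hδpos c hc)).ne').mp (hδeq c hc)).symm
  have hV :=
    AdditiveSlowVariation.tendsto_sub_of_eventually_eq hL (sub_pos.mpr hlam.2) hX hY <| by
    filter_upwards [eventually_gt_atTop 0] with c hc
    rw [hfe c hc, hfe (t * c) (mul_pos ht hc), log_mul ht.ne' hc.ne']
    ring
  have hlim : t ^ (1 / (lam - 1)) = exp (-(log t / (1 - lam))) := by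
    rw [rpow_def_of_pos ht, ← neg_sub, div_neg, mul_neg, mul_one_div]
  rw [hlim]
  refine ((continuous_exp.tendsto _).comp hV.neg).congr' ?_
  filter_upwards [eventually_gt_atTop 0] with c hc
  simp only [Function.comp_apply, neg_sub, sub_neg_eq_add, neg_add_eq_sub, exp_sub,
    exp_log (hδpos c hc), exp_log (hδpos _ (mul_pos ht hc))]
end

section
/- Let X be a centered Gaussian process with stationary increments and continuous sample paths whose variance function σ² satisfies: X(t)/t → 0 a.s. as t → −∞. Then for each c > 0 and t ∈ ℝ, Q(t) := sup_{−∞ < s ≤ t}(X(t) − X(s) − c(t−s)) is almost surely finite, and the process {Q(t) : t ≥ 0} is strictly stationary. -/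
/-!
The drift condition makes `s ↦ X(t) − X(s) − c(t − s)` tend to `−∞` as `s → −∞`, so its supremum
over `(−∞, t]` is that of a continuous function on a compact interval together with a tail bounded
by `0`.

For stationarity, `Q(t + h)` is the same functional of the increment process `X(· + h) − X(h)` as
`Q(t)` is of `X`. On continuous paths that functional only depends on rational times, so it is
measurable for the product σ-algebra on `ℝ → ℝ`, and stationarity of increments transfers to `Q`.
-/

open MeasureTheory ProbabilityTheory Filter Set Real
open scoped Topology

/-- The stationary buffer content process fed by the process X, drained at rate c. -/
noncomputable def bufferQ {Ω : Type*} (X : ℝ → Ω → ℝ) (c t : ℝ) (ω : Ω) : ℝ :=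
  sSup ((fun s => X t ω - X s ω - c * (t - s)) '' Set.Iic t)

theorem csSup_eq_of_subset_of_subset_closure {α : Type*} [ConditionallyCompleteLinearOrder α]
    [TopologicalSpace α] [ClosedIicTopology α] {s t : Set α} (hst : s ⊆ t)
    (hts : t ⊆ closure s) : sSup t = sSup s := by
  rcases s.eq_empty_or_nonempty with rfl | hs
  · rw [closure_empty, subset_empty_iff] at hts
    rw [hts]
  by_cases hbdd : BddAbove s
  · have htbdd : BddAbove t := hbdd.closure.mono hts
    exact (isLUB_csSup (hs.mono hst) htbdd).unique
      ((isLUB_iff_of_subset_of_subset_closure hst hts).1 (isLUB_csSup hs hbdd))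
  · have htbdd : ¬BddAbove t := fun h => hbdd (h.mono hst)
    rw [csSup_of_not_bddAbove hbdd, csSup_of_not_bddAbove htbdd]

theorem Iic_subset_closure_Iio_inter_range_ratCast (t : ℝ) :
    Iic t ⊆ closure (Iio t ∩ range ((↑) : ℚ → ℝ)) := by
  rw [← closure_Iio]
  exact closure_minimal (Rat.denseRange_cast.open_subset_closure_inter isOpen_Iio) isClosed_closure

theorem Continuous.sSup_image_Iic_eq_ratCast {g : ℝ → ℝ} (hg : Continuous g) (t : ℝ) :
    sSup (g '' Iic t) = sSup (g '' (Iio t ∩ range ((↑) : ℚ → ℝ))) :=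
  csSup_eq_of_subset_of_subset_closure
    (image_mono (inter_subset_left.trans Iio_subset_Iic_self))
    ((image_mono (Iic_subset_closure_Iio_inter_range_ratCast t)).trans
      (image_closure_subset_closure_image hg))

theorem Continuous.bddAbove_image_Iic {g : ℝ → ℝ} (hg : Continuous g)
    (hlim : Tendsto g atBot atBot) (t : ℝ) : BddAbove (g '' Iic t) := by
  obtain ⟨s₀, hs₀⟩ := eventually_atBot.1 (hlim.eventually_le_atBot 0)
  have hsplit : Iic t ⊆ Iic s₀ ∪ Icc s₀ t := fun s hs =>
    (le_total s s₀).imp id fun h => ⟨h, hs⟩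
  refine BddAbove.mono (image_mono hsplit) ?_
  rw [image_union]
  exact BddAbove.union ⟨0, forall_mem_image.2 hs₀⟩ (isCompact_Icc.bddAbove_image hg.continuousOn)

theorem tendsto_buffer_integrand_atBot {f : ℝ → ℝ} (hf : Tendsto (fun s => f s / s) atBot (𝓝 0))
    {c : ℝ} (hc : 0 < c) (t : ℝ) :
    Tendsto (fun s => f t - f s - c * (t - s)) atBot atBot := by
  have hprod : Tendsto (fun s => s * (c - f s / s)) atBot atBot :=
    tendsto_id.atBot_mul_pos (by simpa using hc) (tendsto_const_nhds.sub hf)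
  refine tendsto_atBot_add_const_left _ (f t - c * t) hprod |>.congr' ?_
  filter_upwards [eventually_lt_atBot (0 : ℝ)] with s hs
  rw [mul_sub, mul_div_cancel₀ _ hs.ne]
  ring

/-- Restricting the supremum to rational times makes this measurable for the product σ-algebra. -/
noncomputable def ratBufferContent (c : ℝ) (f : ℝ → ℝ) (t : ℝ) : ℝ :=
  sSup ((fun s => f t - f s - c * (t - s)) '' (Iio t ∩ range ((↑) : ℚ → ℝ)))

theorem measurable_ratBufferContent (c : ℝ) : Measurable (ratBufferContent c) := by
  refine measurable_pi_lambda _ fun t => ?_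
  have : Countable ↥(Iio t ∩ range ((↑) : ℚ → ℝ)) :=
    ((countable_range _).mono inter_subset_right).to_subtype
  simp_rw [ratBufferContent, sSup_image']
  exact Measurable.iSup fun s =>
    ((measurable_pi_apply t).sub (measurable_pi_apply (s : ℝ))).sub measurable_const

section bufferQ

variable {Ω : Type*} (X : ℝ → Ω → ℝ) (c : ℝ)

theorem bufferQ_eq_ratBufferContent {ω : Ω} (hX : Continuous fun t => X t ω) (t : ℝ) :
    bufferQ X c t ω = ratBufferContent c (fun s => X s ω) t :=
  (continuous_const.sub hX).sub (continuous_const.mul (continuous_const.sub continuous_id))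
    |>.sSup_image_Iic_eq_ratCast t

theorem bufferQ_add (h t : ℝ) (ω : Ω) :
    bufferQ X c (t + h) ω = bufferQ (fun u ω => X (u + h) ω - X h ω) c t ω := by
  rw [bufferQ, bufferQ, ← image_add_const_Iic, image_image]
  exact congrArg sSup (image_congr fun u _ => by ring)

theorem map_bufferQ [MeasurableSpace Ω] (μ : Measure Ω) (hmeas : ∀ t, Measurable (X t))
    (hcont : ∀ ω, Continuous fun t => X t ω) :
    μ.map (fun ω t => bufferQ X c t ω) = (μ.map fun ω t => X t ω).map (ratBufferContent c) := by
  rw [Measure.map_map (measurable_ratBufferContent c) (measurable_pi_lambda _ hmeas)]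
  congr 1
  funext ω t
  exact bufferQ_eq_ratBufferContent X c (hcont ω) t

end bufferQ

theorem stmt12_general {Ω : Type*} [MeasureSpace Ω]
    (X : ℝ → Ω → ℝ)
    (hmeas : ∀ t, Measurable (X t))
    (hcont : ∀ ω, Continuous (fun t => X t ω))
    (hstat : ∀ h : ℝ,
      Measure.map (fun ω => fun t : ℝ => X (t + h) ω - X h ω) ℙ =
        Measure.map (fun ω => fun t : ℝ => X t ω) ℙ)
    (hdrift : ∀ᵐ ω ∂(ℙ : Measure Ω), Tendsto (fun t => X t ω / t) atBot (nhds 0)) :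
    ∀ c > (0:ℝ),
      (∀ t : ℝ, ∀ᵐ ω ∂(ℙ : Measure Ω),
        BddAbove ((fun s => X t ω - X s ω - c * (t - s)) '' Set.Iic t)) ∧
      (∀ h ≥ (0:ℝ),
        Measure.map (fun ω => fun t : ℝ => bufferQ X c (t + h) ω) ℙ =
          Measure.map (fun ω => fun t : ℝ => bufferQ X c t ω) ℙ) := by
  intro c hc
  refine ⟨fun t => ?_, fun h _ => ?_⟩
  · filter_upwards [hdrift] with ω hω
    exact Continuous.bddAbove_image_Iic (by fun_prop) (tendsto_buffer_integrand_atBot hω hc t) t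
  · let Y : ℝ → Ω → ℝ := fun u ω => X (u + h) ω - X h ω
    calc Measure.map (fun ω t => bufferQ X c (t + h) ω) ℙ
        = Measure.map (fun ω t => bufferQ Y c t ω) ℙ := by simp_rw [bufferQ_add X c h]; rfl
      _ = (Measure.map (fun ω t => Y t ω) ℙ).map (ratBufferContent c) :=
          map_bufferQ Y c ℙ (fun t => (hmeas _).sub (hmeas h)) (fun ω => by fun_prop)
      _ = (Measure.map (fun ω t => X t ω) ℙ).map (ratBufferContent c) := by rw [← hstat h]
      _ = Measure.map (fun ω t => bufferQ X c t ω) ℙ := (map_bufferQ X c ℙ hmeas hcont).symm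

/-- For a centered Gaussian process with stationary increments, continuous paths and
X(t)/t → 0 a.s. as t → -∞, the buffer content Q(t) is a.s. finite for each c > 0 and t,
and the process {Q(t) : t ≥ 0} is strictly stationary. -/
theorem stmt12 {Ω : Type*} [MeasureSpace Ω] [IsProbabilityMeasure (ℙ : Measure Ω)]
    (X : ℝ → Ω → ℝ)
    (hmeas : ∀ t, Measurable (X t))
    (hcont : ∀ ω, Continuous (fun t => X t ω))
    (h0 : ∀ ω, X 0 ω = 0)
    (hcentered : ∀ t, ∫ ω, X t ω = 0)
    (hgauss : ∀ (n : ℕ) (t a : Fin n → ℝ), ∃ v : NNReal,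
      Measure.map (fun ω => ∑ i, a i * X (t i) ω) ℙ = gaussianReal 0 v)
    (hstat : ∀ h : ℝ,
      Measure.map (fun ω => fun t : ℝ => X (t + h) ω - X h ω) ℙ =
        Measure.map (fun ω => fun t : ℝ => X t ω) ℙ)
    (hdrift : ∀ᵐ ω ∂(ℙ : Measure Ω), Tendsto (fun t => X t ω / t) atBot (nhds 0)) :
    ∀ c > (0:ℝ),
      (∀ t : ℝ, ∀ᵐ ω ∂(ℙ : Measure Ω),
        BddAbove ((fun s => X t ω - X s ω - c * (t - s)) '' Set.Iic t)) ∧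
      (∀ h ≥ (0:ℝ),
        Measure.map (fun ω => fun t : ℝ => bufferQ X c (t + h) ω) ℙ =
          Measure.map (fun ω => fun t : ℝ => bufferQ X c t ω) ℙ) :=
  stmt12_general X hmeas hcont hstat hdrift
end
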